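/- Gaussian bridge Markov property at a stopping time: let $(X_1,\dots,X_\kappa)$ be distributed according to the discrete Gaussian bridge $\mathcal{B}_\kappa(x_0,x_{\kappa+1})$ with density proportional to $\exp(-\frac12((x_0-x_1)^2+(x_1-x_2)^2+\dots+(x_\kappa-x_{\kappa+1})^2))$, and let $K$ be a stopping time with respect to the natural filtration of $(X_1,\dots,X_\kappa)$ satisfying $K<\kappa$ almost surely. Then the conditional law of $(X_{K+1},\dots,X_\kappa)$ given $(X_1,\dots,X_K)$ is the Gaussian bridge $\mathcal{B}_{\kappa-K}(X_K,x_{\kappa+1})$. -/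

import Mathlib

open MeasureTheory

/-- Extension of `x : Fin m → ℝ` by the endpoints `a` at index `0` and `b` at indices
`> m`, so that `ext m a b x i = x_i` for `1 ≤ i ≤ m` (1-based indexing). -/
noncomputable def bridgeExt (m : ℕ) (a b : ℝ) (x : Fin m → ℝ) : ℕ → ℝ :=
  fun i => if h : 1 ≤ i ∧ i ≤ m then x ⟨i - 1, by omega⟩ else if i = 0 then a else b

/-- Unnormalized density of the discrete Gaussian bridge `𝓑_m(a,b)`:
`exp(-½((a-x₁)² + (x₁-x₂)² + ⋯ + (x_m-b)²))`. -/
noncomputable def bridgeDensity (m : ℕ) (a b : ℝ) (x : Fin m → ℝ) : ℝ :=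
  Real.exp (-(1 / 2) * ∑ i ∈ Finset.range (m + 1),
    (bridgeExt m a b x i - bridgeExt m a b x (i + 1)) ^ 2)

/-- The discrete Gaussian bridge distribution `𝓑_m(a,b)` on `ℝ^m`. -/
noncomputable def bridgeMeasure (m : ℕ) (a b : ℝ) : Measure (Fin m → ℝ) :=
  ((volume.withDensity fun x => ENNReal.ofReal (bridgeDensity m a b x)) Set.univ)⁻¹ •
    (volume.withDensity fun x => ENNReal.ofReal (bridgeDensity m a b x))

/-- The bridge measure `𝓑_m(a,b)` transported to the sequence space `ℕ → ℝ` by padding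
with `0` beyond index `m` (to accommodate a random length). -/
noncomputable def paddedBridgeMeasure (m : ℕ) (a b : ℝ) : Measure (ℕ → ℝ) :=
  Measure.map (fun (y : Fin m → ℝ) (i : ℕ) => if h : i < m then y ⟨i, h⟩ else 0)
    (bridgeMeasure m a b)

/-- The σ-field `σ(X_1,…,X_l)` generated by the first `min l κ` components of `X`. -/
noncomputable def headField {Ω : Type*} (k : ℕ) (X : Ω → Fin k → ℝ) (l : ℕ) :
    MeasurableSpace Ω :=
  MeasurableSpace.comap
    (fun ω (j : Fin (min l k)) => X ω ⟨j.1, by have := j.2; omega⟩) MeasurableSpace.pi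

/-! At a fixed time `l` the bridge density factors as the random-walk weight of `(X_1,…,X_l)`
times the bridge density from `X_l` to `x_{κ+1}` of the remaining coordinates, so by Fubini the
conditional law of the tail given `X_1,…,X_l` is `𝓑_{κ-l}(X_l, x_{κ+1})`. On `{K = l}` the
σ-algebra of the stopping time agrees with `σ(X_1,…,X_l)`, so the conditional expectation given
it is computed level by level from the fixed-time statement. -/

open Filter

namespace GaussianBridge

def pathEnd (l : ℕ) (a : ℝ) (h : Fin l → ℝ) : ℝ :=
  if hl : l = 0 then a else h ⟨l - 1, by omega⟩

section Ext

variable {m i : ℕ} {a b : ℝ} {x : Fin m → ℝ}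

@[simp]
lemma bridgeExt_zero : bridgeExt m a b x 0 = a := by
  simp [bridgeExt]

lemma bridgeExt_of_le (h1 : 1 ≤ i) (h2 : i ≤ m) :
    bridgeExt m a b x i = x ⟨i - 1, by omega⟩ :=
  dif_pos ⟨h1, h2⟩

lemma bridgeExt_of_lt (h : m < i) : bridgeExt m a b x i = b := by
  rw [bridgeExt, dif_neg (by omega), if_neg (by omega)]

lemma bridgeExt_eq_dite (hi : i ≤ m) :
    bridgeExt m a b x i = if h : i = 0 then a else x ⟨i - 1, by omega⟩ := by
  rcases Nat.eq_zero_or_pos i with rfl | hi0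
  · simp
  · rw [bridgeExt_of_le hi0 hi, dif_neg hi0.ne']

lemma bridgeExt_last : bridgeExt m a b x m = pathEnd m a x := by
  rcases Nat.eq_zero_or_pos m with rfl | hm
  · simp [pathEnd]
  · rw [bridgeExt_of_le hm le_rfl, pathEnd, dif_neg hm.ne']

end Ext

lemma measurable_pathEnd (l : ℕ) (a : ℝ) : Measurable (pathEnd l a) := by
  unfold pathEnd
  split_ifs <;> fun_prop

lemma measurable_bridgeExt (m i : ℕ) :
    Measurable fun p : ℝ × ℝ × (Fin m → ℝ) => bridgeExt m p.1 p.2.1 p.2.2 i := by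
  unfold bridgeExt
  split_ifs <;> fun_prop

lemma measurable_bridgeDensity_uncurry (m : ℕ) :
    Measurable fun p : ℝ × ℝ × (Fin m → ℝ) => bridgeDensity m p.1 p.2.1 p.2.2 := by
  unfold bridgeDensity
  exact Real.measurable_exp.comp (measurable_const.mul (Finset.measurable_sum _ fun i _ =>
    ((measurable_bridgeExt m i).sub (measurable_bridgeExt m (i + 1))).pow_const 2))

lemma measurable_bridgeDensity (m : ℕ) (a b : ℝ) : Measurable (bridgeDensity m a b) :=
  (measurable_bridgeDensity_uncurry m).comp (f := fun x => (a, b, x)) (by fun_prop)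

lemma measurable_bridgeDensity_start (m : ℕ) (b : ℝ) :
    Measurable fun p : ℝ × (Fin m → ℝ) => bridgeDensity m p.1 b p.2 :=
  (measurable_bridgeDensity_uncurry m).comp (f := fun p : ℝ × (Fin m → ℝ) => (p.1, b, p.2))
    (measurable_fst.prodMk (measurable_const.prodMk measurable_snd))

lemma bridgeDensity_pos (m : ℕ) (a b : ℝ) (x : Fin m → ℝ) : 0 < bridgeDensity m a b x :=
  Real.exp_pos _

lemma bridgeDensity_le_one (m : ℕ) (a b : ℝ) (x : Fin m → ℝ) : bridgeDensity m a b x ≤ 1 := by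
  rw [bridgeDensity, Real.exp_le_one_iff, neg_mul, neg_nonpos]
  exact mul_nonneg (by norm_num) (Finset.sum_nonneg fun _ _ => sq_nonneg _)

section Append

variable {l m : ℕ} {a b : ℝ} {h : Fin l → ℝ} {y : Fin m → ℝ}

lemma bridgeExt_append_of_le {c : ℝ} {i : ℕ} (hi : i ≤ l) :
    bridgeExt (l + m) a b (Fin.append h y) i = bridgeExt l a c h i := by
  rcases Nat.eq_zero_or_pos i with rfl | hi0
  · simp
  rw [bridgeExt_of_le hi0 (by omega), bridgeExt_of_le hi0 hi]
  exact Fin.append_left h y ⟨i - 1, by omega⟩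

lemma bridgeExt_append_add (j : ℕ) :
    bridgeExt (l + m) a b (Fin.append h y) (l + j) = bridgeExt m (pathEnd l a h) b y j := by
  rcases Nat.eq_zero_or_pos j with rfl | hj0
  · rw [bridgeExt_zero, Nat.add_zero, bridgeExt_append_of_le (c := b) le_rfl, bridgeExt_last]
  rcases le_or_gt j m with hjm | hjm
  · rw [bridgeExt_of_le (by omega) (by omega), bridgeExt_of_le hj0 hjm]
    convert Fin.append_right h y ⟨j - 1, by omega⟩ using 2
    ext; simp; omega
  · rw [bridgeExt_of_lt (by omega), bridgeExt_of_lt hjm]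

/-- The first factor is a bridge ending at its own last point, so its final increment vanishes
and it is just the random-walk weight of the head. -/
lemma bridgeDensity_append :
    bridgeDensity (l + m) a b (Fin.append h y) =
      bridgeDensity l a (pathEnd l a h) h * bridgeDensity m (pathEnd l a h) b y := by
  set e := pathEnd l a h
  have head : ∑ i ∈ Finset.range (l + 1), (bridgeExt l a e h i - bridgeExt l a e h (i + 1)) ^ 2 =
      ∑ i ∈ Finset.range l, (bridgeExt (l + m) a b (Fin.append h y) i -
        bridgeExt (l + m) a b (Fin.append h y) (i + 1)) ^ 2 := by
    rw [Finset.sum_range_succ, bridgeExt_last, bridgeExt_of_lt (Nat.lt_succ_self l), sub_self,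
      zero_pow two_ne_zero, add_zero]
    refine Finset.sum_congr rfl fun i hi => ?_
    rw [Finset.mem_range] at hi
    rw [bridgeExt_append_of_le hi.le, bridgeExt_append_of_le hi]
  have tail : ∑ j ∈ Finset.range (m + 1), (bridgeExt m e b y j - bridgeExt m e b y (j + 1)) ^ 2 =
      ∑ j ∈ Finset.range (m + 1), (bridgeExt (l + m) a b (Fin.append h y) (l + j) -
        bridgeExt (l + m) a b (Fin.append h y) (l + j + 1)) ^ 2 := by
    refine Finset.sum_congr rfl fun j _ => ?_
    rw [bridgeExt_append_add, Nat.add_assoc, bridgeExt_append_add]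
  simp only [bridgeDensity, ← Real.exp_add, ← mul_add, head, tail]
  rw [show l + m + 1 = l + (m + 1) by omega, Finset.sum_range_add]

end Append

section Split

variable {l m : ℕ}

def headProj (l m : ℕ) (z : Fin (l + m) → ℝ) : Fin l → ℝ := fun i => z (Fin.castAdd m i)

def tailProj (l m : ℕ) (z : Fin (l + m) → ℝ) : Fin m → ℝ := fun j => z (Fin.natAdd l j)

lemma measurable_headProj : Measurable (headProj l m) :=
  measurable_pi_lambda _ fun _ => measurable_pi_apply _

lemma measurable_tailProj : Measurable (tailProj l m) :=
  measurable_pi_lambda _ fun _ => measurable_pi_apply _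

@[simp]
lemma headProj_append (h : Fin l → ℝ) (y : Fin m → ℝ) : headProj l m (Fin.append h y) = h :=
  funext <| Fin.append_left h y

@[simp]
lemma tailProj_append (h : Fin l → ℝ) (y : Fin m → ℝ) : tailProj l m (Fin.append h y) = y :=
  funext <| Fin.append_right h y

def finAppendEquiv (l m : ℕ) : ((Fin l → ℝ) × (Fin m → ℝ)) ≃ᵐ (Fin (l + m) → ℝ) :=
  (MeasurableEquiv.sumPiEquivProdPi fun _ : Fin l ⊕ Fin m => ℝ).symm.trans
    (MeasurableEquiv.piCongrLeft (fun _ => ℝ) finSumFinEquiv)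

lemma finAppendEquiv_apply (p : (Fin l → ℝ) × (Fin m → ℝ)) :
    finAppendEquiv l m p = Fin.append p.1 p.2 := by
  funext i
  refine Fin.addCases (fun i => ?_) (fun j => ?_) i
  · rw [Fin.append_left, ← finSumFinEquiv_apply_left]
    exact Equiv.piCongrLeft_sumInl (fun _ => ℝ) finSumFinEquiv p.1 p.2 i
  · rw [Fin.append_right, ← finSumFinEquiv_apply_right]
    exact Equiv.piCongrLeft_sumInr (fun _ => ℝ) finSumFinEquiv p.1 p.2 j

lemma measurePreserving_finAppendEquiv :
    MeasurePreserving (finAppendEquiv l m) volume volume :=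
  (volume_measurePreserving_piCongrLeft (fun _ => ℝ) finSumFinEquiv).comp
    (volume_measurePreserving_sumPiEquivProdPi_symm fun _ => ℝ)

lemma lintegral_fin_append {F : (Fin (l + m) → ℝ) → ENNReal} (hF : Measurable F) :
    ∫⁻ z, F z = ∫⁻ h, ∫⁻ y, F (Fin.append h y) := by
  rw [← measurePreserving_finAppendEquiv.lintegral_comp hF, Measure.volume_eq_prod,
    lintegral_prod (fun p => F (finAppendEquiv l m p))
      (hF.comp (finAppendEquiv l m).measurable).aemeasurable]
  simp only [finAppendEquiv_apply]

lemma setIntegral_headProj_preimage (B : Set (Fin l → ℝ))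
    {F : (Fin (l + m) → ℝ) → ℝ} (hF : Integrable F) :
    ∫ z in headProj l m ⁻¹' B, F z = ∫ h in B, ∫ y, F (Fin.append h y) := by
  have hpre : finAppendEquiv l m ⁻¹' (headProj l m ⁻¹' B) = B ×ˢ Set.univ := by
    ext p
    simp [finAppendEquiv_apply]
  rw [← measurePreserving_finAppendEquiv.setIntegral_preimage_emb
    (finAppendEquiv l m).measurableEmbedding, hpre, Measure.volume_eq_prod, setIntegral_prod]
  · simp only [finAppendEquiv_apply, Measure.restrict_univ]
  · exact ((measurePreserving_finAppendEquiv.integrable_comp_emb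
      (finAppendEquiv l m).measurableEmbedding).mpr hF).integrableOn

end Split

section Normalizer

open ENNReal

noncomputable def bridgeNormalizer (m : ℕ) (a b : ℝ) : ℝ≥0∞ :=
  ∫⁻ x, ENNReal.ofReal (bridgeDensity m a b x)

lemma bridgeNormalizer_add (l m : ℕ) (a b : ℝ) :
    bridgeNormalizer (l + m) a b = ∫⁻ h, ENNReal.ofReal (bridgeDensity l a (pathEnd l a h) h) *
      bridgeNormalizer m (pathEnd l a h) b := by
  rw [bridgeNormalizer, lintegral_fin_append (measurable_bridgeDensity _ a b).ennreal_ofReal]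
  refine lintegral_congr fun h => ?_
  simp only [bridgeDensity_append, ENNReal.ofReal_mul (bridgeDensity_pos _ _ _ _).le]
  exact lintegral_const_mul _ (measurable_bridgeDensity _ _ _).ennreal_ofReal

lemma bridgeDensity_one (a : ℝ) (h : Fin 1 → ℝ) :
    bridgeDensity 1 a (pathEnd 1 a h) h = Real.exp (-(1 / 2) * (h 0 - a) ^ 2) := by
  simp [bridgeDensity, Finset.sum_range_succ, bridgeExt_last, bridgeExt_of_lt, pathEnd,
    sub_sq_comm a]

lemma bridgeNormalizer_le (m : ℕ) (a b : ℝ) :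
    bridgeNormalizer m a b ≤ (∫⁻ c : ℝ, ENNReal.ofReal (Real.exp (-(1 / 2) * c ^ 2))) ^ m := by
  induction m generalizing a with
  | zero =>
    calc bridgeNormalizer 0 a b ≤ ∫⁻ _ : Fin 0 → ℝ, 1 :=
          lintegral_mono fun x => ENNReal.ofReal_le_one.mpr (bridgeDensity_le_one 0 a b x)
      _ = _ := by simp [volume_pi]
  | succ m ih =>
    set G := fun c : ℝ => ENNReal.ofReal (Real.exp (-(1 / 2) * c ^ 2))
    have hG : Measurable G := by fun_prop
    have shift : ∫⁻ h : Fin 1 → ℝ, G (h 0 - a) = ∫⁻ c, G c := by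
      refine ((volume_preserving_funUnique (Fin 1) ℝ).symm.lintegral_comp
        (f := fun h : Fin 1 → ℝ => G (h 0 - a)) (hG.comp (by fun_prop))).symm.trans ?_
      exact lintegral_sub_right_eq_self G a
    calc bridgeNormalizer (m + 1) a b = bridgeNormalizer (1 + m) a b := by rw [Nat.add_comm]
      _ ≤ ∫⁻ h : Fin 1 → ℝ, G (h 0 - a) * (∫⁻ c, G c) ^ m := by
          rw [bridgeNormalizer_add]
          refine lintegral_mono fun h => ?_
          rw [bridgeDensity_one]
          gcongr
          exact ih _
      _ = (∫⁻ c, G c) ^ (m + 1) := by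
          rw [lintegral_mul_const (f := fun h : Fin 1 → ℝ => G (h 0 - a)) _
            (hG.comp (by fun_prop)), shift, pow_succ']

lemma bridgeNormalizer_lt_top (m : ℕ) (a b : ℝ) : bridgeNormalizer m a b < ∞ := by
  refine (bridgeNormalizer_le m a b).trans_lt (pow_lt_top ?_)
  exact (integrable_exp_neg_mul_sq (by norm_num : (0 : ℝ) < 1 / 2)).lintegral_lt_top

lemma bridgeNormalizer_pos (m : ℕ) (a b : ℝ) : 0 < bridgeNormalizer m a b := by
  rw [bridgeNormalizer, lintegral_pos_iff_support (measurable_bridgeDensity m a b).ennreal_ofReal]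
  have : Function.support (fun x => ENNReal.ofReal (bridgeDensity m a b x)) = Set.univ :=
    Set.eq_univ_of_forall fun x => by simpa using bridgeDensity_pos m a b x
  rw [this]
  exact isOpen_univ.measure_pos _ Set.univ_nonempty

lemma bridgeMeasure_eq (m : ℕ) (a b : ℝ) :
    bridgeMeasure m a b = (bridgeNormalizer m a b)⁻¹ •
      volume.withDensity fun x => ENNReal.ofReal (bridgeDensity m a b x) := by
  rw [bridgeMeasure, withDensity_apply _ MeasurableSet.univ, setLIntegral_univ, bridgeNormalizer]

instance (m : ℕ) (a b : ℝ) : IsProbabilityMeasure (bridgeMeasure m a b) := by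
  constructor
  rw [bridgeMeasure_eq, Measure.smul_apply, withDensity_apply _ MeasurableSet.univ,
    setLIntegral_univ, smul_eq_mul, ← bridgeNormalizer]
  exact ENNReal.inv_mul_cancel (bridgeNormalizer_pos m a b).ne' (bridgeNormalizer_lt_top m a b).ne

lemma integrable_bridgeDensity (m : ℕ) (a b : ℝ) : Integrable (bridgeDensity m a b) := by
  refine ⟨(measurable_bridgeDensity m a b).aestronglyMeasurable, ?_⟩
  rw [hasFiniteIntegral_iff_ofReal (ae_of_all _ fun x => (bridgeDensity_pos m a b x).le)]
  exact bridgeNormalizer_lt_top m a b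

lemma integral_bridgeDensity (m : ℕ) (a b : ℝ) :
    ∫ x, bridgeDensity m a b x = (bridgeNormalizer m a b).toReal := by
  rw [integral_eq_lintegral_of_nonneg_ae (ae_of_all _ fun x => (bridgeDensity_pos m a b x).le)
    (measurable_bridgeDensity m a b).aestronglyMeasurable, bridgeNormalizer]

lemma setIntegral_bridgeMeasure (m : ℕ) (a b : ℝ) (F : (Fin m → ℝ) → ℝ) (s : Set (Fin m → ℝ)) :
    ∫ x in s, F x ∂bridgeMeasure m a b =
      (bridgeNormalizer m a b).toReal⁻¹ * ∫ x in s, F x * bridgeDensity m a b x := by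
  rw [bridgeMeasure_eq, Measure.restrict_smul, integral_smul_measure, restrict_withDensity' s,
    integral_withDensity_eq_integral_toReal_smul₀
      (measurable_bridgeDensity m a b).ennreal_ofReal.aemeasurable
      (ae_of_all _ fun _ => ENNReal.ofReal_lt_top), ENNReal.toReal_inv, smul_eq_mul]
  congr 1
  refine integral_congr_ae (ae_of_all _ fun x => ?_)
  dsimp only
  rw [ENNReal.toReal_ofReal (bridgeDensity_pos m a b x).le, smul_eq_mul, mul_comm]

lemma integral_bridgeMeasure (m : ℕ) (a b : ℝ) (F : (Fin m → ℝ) → ℝ) :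
    ∫ x, F x ∂bridgeMeasure m a b =
      (bridgeNormalizer m a b).toReal⁻¹ * ∫ x, F x * bridgeDensity m a b x := by
  simpa using setIntegral_bridgeMeasure m a b F Set.univ

lemma integral_mul_bridgeDensity (m : ℕ) (a b : ℝ) (F : (Fin m → ℝ) → ℝ) :
    ∫ x, F x * bridgeDensity m a b x =
      (∫ x, F x ∂bridgeMeasure m a b) * ∫ x, bridgeDensity m a b x := by
  have := (ENNReal.toReal_pos (bridgeNormalizer_pos m a b).ne'
    (bridgeNormalizer_lt_top m a b).ne).ne'
  rw [integral_bridgeMeasure, integral_bridgeDensity]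
  field_simp

lemma measurable_integral_bridgeMeasure (m : ℕ) (b : ℝ) {F : (Fin m → ℝ) → ℝ}
    (hF : Measurable F) : Measurable fun a => ∫ x, F x ∂bridgeMeasure m a b := by
  simp_rw [integral_bridgeMeasure]
  have hZ : Measurable fun a => bridgeNormalizer m a b :=
    (measurable_bridgeDensity_start m b).ennreal_ofReal.lintegral_prod_right'
  exact hZ.ennreal_toReal.inv.mul ((hF.comp measurable_snd).mul
    (measurable_bridgeDensity_start m b)).stronglyMeasurable.integral_prod_right'.measurable

lemma abs_integral_bridgeMeasure_le (m : ℕ) (a b : ℝ) {F : (Fin m → ℝ) → ℝ} {C : ℝ}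
    (hFC : ∀ x, |F x| ≤ C) : |∫ x, F x ∂bridgeMeasure m a b| ≤ C := by
  simpa using norm_integral_le_of_norm_le_const (μ := bridgeMeasure m a b) (C := C)
    (ae_of_all _ fun x => (Real.norm_eq_abs (F x)).trans_le (hFC x))

end Normalizer

theorem setIntegral_bridgeMeasure_tail {l m : ℕ} (a b : ℝ) (B : Set (Fin l → ℝ))
    {ψ : (Fin m → ℝ) → ℝ} (hψ : Measurable ψ) {C : ℝ} (hψC : ∀ y, |ψ y| ≤ C) :
    ∫ z in headProj l m ⁻¹' B, ψ (tailProj l m z) ∂bridgeMeasure (l + m) a b =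
      ∫ z in headProj l m ⁻¹' B, (∫ y, ψ y ∂bridgeMeasure m (pathEnd l a (headProj l m z)) b)
        ∂bridgeMeasure (l + m) a b := by
  set Ψ := fun h => ∫ y, ψ y ∂bridgeMeasure m (pathEnd l a h) b
  have hΨ : Measurable Ψ :=
    (measurable_integral_bridgeMeasure m b hψ).comp (measurable_pathEnd l a)
  have integrable (G : (Fin (l + m) → ℝ) → ℝ) (hG : Measurable G) (hGC : ∀ z, |G z| ≤ C) :
      Integrable fun z => G z * bridgeDensity (l + m) a b z :=
    (integrable_bridgeDensity _ a b).bdd_mul hG.aestronglyMeasurable (ae_of_all _ hGC)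
  rw [setIntegral_bridgeMeasure, setIntegral_bridgeMeasure,
    setIntegral_headProj_preimage B (integrable (fun z => ψ (tailProj l m z))
      (hψ.comp measurable_tailProj) fun z => hψC _),
    setIntegral_headProj_preimage B (integrable (fun z => Ψ (headProj l m z))
      (hΨ.comp measurable_headProj)
      fun z => abs_integral_bridgeMeasure_le _ _ _ hψC)]
  congr 2 with h
  simp only [headProj_append, tailProj_append, bridgeDensity_append]
  set w := bridgeDensity l a (pathEnd l a h) h
  calc ∫ y, ψ y * (w * bridgeDensity m (pathEnd l a h) b y)
      = w * ∫ y, ψ y * bridgeDensity m (pathEnd l a h) b y := by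
        rw [← integral_const_mul]; congr with y; ring
    _ = w * (Ψ h * ∫ y, bridgeDensity m (pathEnd l a h) b y) := by
        rw [integral_mul_bridgeDensity]
    _ = ∫ y, Ψ h * (w * bridgeDensity m (pathEnd l a h) b y) := by
        rw [← integral_const_mul, ← integral_const_mul]; congr with y; ring

def zeroPad (m : ℕ) (y : Fin m → ℝ) : ℕ → ℝ := fun i => if h : i < m then y ⟨i, h⟩ else 0

def shiftPad (k l : ℕ) (v : Fin k → ℝ) : ℕ → ℝ :=
  fun i => if h : l + i < k then v ⟨l + i, h⟩ else 0

lemma measurable_zeroPad (m : ℕ) : Measurable (zeroPad m) :=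
  measurable_pi_lambda _ fun i => by unfold zeroPad; split_ifs <;> fun_prop

lemma measurable_shiftPad (k l : ℕ) : Measurable (shiftPad k l) :=
  measurable_pi_lambda _ fun i => by unfold shiftPad; split_ifs <;> fun_prop

lemma shiftPad_add (l m : ℕ) (v : Fin (l + m) → ℝ) :
    shiftPad (l + m) l v = zeroPad m (tailProj l m v) := by
  funext i
  by_cases h : i < m
  · rw [shiftPad, zeroPad, dif_pos (by omega), dif_pos h]
    rfl
  · rw [shiftPad, zeroPad, dif_neg (by omega), dif_neg h]

lemma integral_paddedBridgeMeasure (m : ℕ) (a b : ℝ) {φ : (ℕ → ℝ) → ℝ} (hφ : Measurable φ) :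
    ∫ y, φ y ∂paddedBridgeMeasure m a b = ∫ y, φ (zeroPad m y) ∂bridgeMeasure m a b :=
  integral_map (measurable_zeroPad m).aemeasurable hφ.aestronglyMeasurable

lemma bridgeExt_eq_pathEnd_headProj (l m : ℕ) (a b : ℝ) (v : Fin (l + m) → ℝ) :
    bridgeExt (l + m) a b v l = pathEnd l a (headProj l m v) := by
  conv_lhs => rw [← Fin.append_castAdd_natAdd (f := v)]
  rw [bridgeExt_append_of_le (c := b) le_rfl, bridgeExt_last]
  rfl

lemma headField_add_eq_comap {Ω : Type*} (l m : ℕ) (X : Ω → Fin (l + m) → ℝ) :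
    headField (l + m) X l =
      MeasurableSpace.comap (fun ω => headProj l m (X ω)) MeasurableSpace.pi := by
  apply le_antisymm
  · let _ := MeasurableSpace.comap (fun ω => headProj l m (X ω)) MeasurableSpace.pi
    have h : Measurable fun ω => headProj l m (X ω) := comap_measurable _
    exact measurable_iff_comap_le.mp <| measurable_pi_iff.mpr fun j =>
      (measurable_pi_apply (⟨j, by have := j.2; omega⟩ : Fin l)).comp h
  · let _ := headField (l + m) X l
    have h : Measurable fun ω (j : Fin (min l (l + m))) => X ω ⟨j, by have := j.2; omega⟩ :=
      comap_measurable _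
    exact measurable_iff_comap_le.mp <| measurable_pi_iff.mpr fun i =>
      (measurable_pi_apply (⟨i, by have := i.2; omega⟩ : Fin (min l (l + m)))).comp h

section HeadField

variable {Ω : Type*} [m0 : MeasurableSpace Ω] {μ : Measure Ω} [IsFiniteMeasure μ] {a b : ℝ}

theorem condExp_tail_headField {l m : ℕ} {X : Ω → Fin (l + m) → ℝ} (hX : Measurable X)
    (hlaw : μ.map X = bridgeMeasure (l + m) a b) {ψ : (Fin m → ℝ) → ℝ} (hψ : Measurable ψ)
    {C : ℝ} (hψC : ∀ y, |ψ y| ≤ C) :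
    μ[fun ω => ψ (tailProj l m (X ω)) | headField (l + m) X l] =ᵐ[μ]
      fun ω => ∫ y, ψ y ∂bridgeMeasure m (pathEnd l a (headProj l m (X ω))) b := by
  set Ψ := fun h => ∫ y, ψ y ∂bridgeMeasure m (pathEnd l a h) b
  have hΨ : Measurable Ψ :=
    (measurable_integral_bridgeMeasure m b hψ).comp (measurable_pathEnd l a)
  have hfm : Measurable fun ω => ψ (tailProj l m (X ω)) := hψ.comp (measurable_tailProj.comp hX)
  rw [headField_add_eq_comap]
  symm
  refine ae_eq_condExp_of_forall_setIntegral_eq (measurable_headProj.comp hX).comap_le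
    (Integrable.of_bound hfm.aestronglyMeasurable C (ae_of_all _ fun ω => hψC _))
    (fun s _ _ => (Integrable.of_bound (hΨ.comp (measurable_headProj.comp hX)).aestronglyMeasurable
      C (ae_of_all _ fun ω => abs_integral_bridgeMeasure_le _ _ _ hψC)).integrableOn)
    ?_ (hΨ.comp (comap_measurable _)).aestronglyMeasurable
  rintro _ ⟨B, hB, rfl⟩ -
  have hT := measurable_headProj (m := m) hB
  calc ∫ ω in X ⁻¹' (headProj l m ⁻¹' B), Ψ (headProj l m (X ω)) ∂μ
      = ∫ z in headProj l m ⁻¹' B, Ψ (headProj l m z) ∂μ.map X :=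
        (setIntegral_map hT (hΨ.comp measurable_headProj).aestronglyMeasurable
          hX.aemeasurable).symm
    _ = ∫ z in headProj l m ⁻¹' B, ψ (tailProj l m z) ∂μ.map X := by
        rw [hlaw]
        exact (setIntegral_bridgeMeasure_tail a b B hψ hψC).symm
    _ = ∫ ω in X ⁻¹' (headProj l m ⁻¹' B), ψ (tailProj l m (X ω)) ∂μ :=
        setIntegral_map hT (hψ.comp measurable_tailProj).aestronglyMeasurable hX.aemeasurable

theorem condExp_shiftPad_headField {k l : ℕ} (hl : l ≤ k) {X : Ω → Fin k → ℝ}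
    (hX : Measurable X) (hlaw : μ.map X = bridgeMeasure k a b) {φ : (ℕ → ℝ) → ℝ}
    (hφ : Measurable φ) {C : ℝ} (hφC : ∀ y, |φ y| ≤ C) :
    μ[fun ω => φ (shiftPad k l (X ω)) | headField k X l] =ᵐ[μ]
      fun ω => ∫ y, φ y ∂paddedBridgeMeasure (k - l) (bridgeExt k a b (X ω) l) b := by
  obtain ⟨m, rfl⟩ := Nat.exists_eq_add_of_le hl
  simp only [shiftPad_add, bridgeExt_eq_pathEnd_headProj, add_tsub_cancel_left,
    integral_paddedBridgeMeasure _ _ _ hφ]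
  exact condExp_tail_headField hX hlaw (hφ.comp (measurable_zeroPad m)) fun _ => hφC _

end HeadField

section Stopping

variable {Ω : Type*} {m0 : MeasurableSpace Ω} {ℱ : Filtration ℕ m0} {τ : Ω → ℕ}

lemma isStoppingTime_natCast_iff :
    IsStoppingTime ℱ (fun ω => (τ ω : WithTop ℕ)) ↔ ∀ n, MeasurableSet[ℱ n] {ω | τ ω ≤ n} := by
  simp only [IsStoppingTime, Nat.cast_withTop, WithTop.coe_le_coe]

lemma generateFrom_eq_stoppingTime_measurableSpace
    (hτ : IsStoppingTime ℱ fun ω => (τ ω : WithTop ℕ)) {N : ℕ} (hτN : ∀ ω, τ ω ≤ N) :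
    MeasurableSpace.generateFrom {A | ∀ n, MeasurableSet[ℱ n] (A ∩ {ω | τ ω ≤ n})} =
      hτ.measurableSpace := by
  conv_rhs => rw [← @MeasurableSpace.generateFrom_measurableSet Ω hτ.measurableSpace]
  congr 1
  ext A
  simp only [Set.mem_ofPred_eq, IsStoppingTime.measurableSet, Nat.cast_withTop,
    WithTop.coe_le_coe]
  refine ⟨fun hA => ⟨le_iSup ℱ N _ ?_, hA⟩, And.right⟩
  simpa [hτN] using hA N

theorem condExp_stoppingTime_ae_eq {E : Type*} [NormedAddCommGroup E] [NormedSpace ℝ E]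
    [CompleteSpace E] {μ : Measure Ω} [SigmaFiniteFiltration μ ℱ]
    (hτ : IsStoppingTime ℱ fun ω => (τ ω : WithTop ℕ)) {f g : ℕ → Ω → E}
    (hf : ∀ n, Integrable (f n) μ) (hfτ : Integrable (fun ω => f (τ ω) ω) μ)
    (hfg : ∀ n ∈ Set.range τ, μ[f n | ℱ n] =ᵐ[μ] g n) :
    μ[fun ω => f (τ ω) ω | hτ.measurableSpace] =ᵐ[μ] fun ω => g (τ ω) ω := by
  have cover : (⋃ n, {ω | τ ω = n}) = Set.univ :=
    Set.iUnion_eq_univ_iff.mpr fun ω => ⟨τ ω, rfl⟩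
  suffices ∀ n, ∀ᵐ ω ∂μ.restrict {ω | τ ω = n},
      μ[fun ω => f (τ ω) ω | hτ.measurableSpace] ω = g (τ ω) ω by
    simpa only [cover, Measure.restrict_univ, EventuallyEq]
      using (ae_restrict_iUnion_iff _ _).mpr this
  intro n
  by_cases hn : n ∈ Set.range τ
  swap
  · have : {ω | τ ω = n} = ∅ := Set.eq_empty_of_forall_notMem fun ω hω => hn ⟨ω, hω⟩
    simp [this]
  have hs : MeasurableSet[ℱ n] {ω | τ ω = n} := by
    simpa using hτ.measurableSet_eq n
  have onLevel : μ[fun ω => f (τ ω) ω | ℱ n] =ᵐ[μ.restrict {ω | τ ω = n}] μ[f n | ℱ n] := by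
    rw [ae_eq_restrict_iff_indicator_ae_eq (ℱ.le n _ hs)]
    refine (condExp_indicator hfτ hs).symm.trans ?_
    have : {ω | τ ω = n}.indicator (fun ω => f (τ ω) ω) = {ω | τ ω = n}.indicator (f n) :=
      Set.indicator_congr fun ω (hω : τ ω = n) => by rw [hω]
    rw [this]
    exact condExp_indicator (hf n) hs
  have stopped := condExp_stopping_time_ae_eq_restrict_eq_of_countable
    (μ := μ) (f := fun ω => f (τ ω) ω) hτ n
  simp only [Nat.cast_withTop, WithTop.coe_inj] at stopped
  filter_upwards [stopped, onLevel, ae_restrict_of_ae (hfg n hn),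
    ae_restrict_mem (ℱ.le n _ hs)] with ω h₁ h₂ h₃ (h₄ : τ ω = n)
  rw [h₁, h₂, h₃, h₄]

end Stopping

section Filtration

variable {Ω : Type*} {k : ℕ} {X : Ω → Fin k → ℝ}

lemma headField_mono {l l' : ℕ} (hll' : l ≤ l') : headField k X l ≤ headField k X l' := by
  let _ := headField k X l'
  have h : Measurable fun ω (j : Fin (min l' k)) => X ω ⟨j, by have := j.2; omega⟩ :=
    comap_measurable _
  exact measurable_iff_comap_le.mp <| measurable_pi_iff.mpr fun j =>
    (measurable_pi_apply (⟨j, by have := j.2; omega⟩ : Fin (min l' k))).comp h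

lemma headField_le [m0 : MeasurableSpace Ω] (hX : Measurable X) (l : ℕ) : headField k X l ≤ m0 :=
  measurable_iff_comap_le.mp <| measurable_pi_iff.mpr fun _ => (measurable_pi_apply _).comp hX

noncomputable def headFiltration [m0 : MeasurableSpace Ω] (hX : Measurable X) :
    Filtration ℕ m0 where
  seq := headField k X
  mono' _ _ := headField_mono
  le' := headField_le hX

end Filtration

end GaussianBridge

open GaussianBridge

/-- Markov property of the discrete Gaussian bridge at a stopping time: if
`(X₁,…,X_κ) ∼ 𝓑_κ(x₀,x_{κ+1})` and `K < κ` is a stopping time of the natural filtration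
of `(X₁,…,X_κ)`, then the conditional law of `(X_{K+1},…,X_κ)` given `(X₁,…,X_K)`
(i.e. given the stopped σ-field) is the Gaussian bridge `𝓑_{κ-K}(X_K, x_{κ+1})`. -/
theorem bridge_markov_stopping_time
    {Ω : Type*} [m0 : MeasurableSpace Ω] (μ : Measure Ω) [IsProbabilityMeasure μ]
    (k : ℕ) (x0 xend : ℝ)
    (X : Ω → Fin k → ℝ) (hX : Measurable X)
    (hlaw : Measure.map X μ = bridgeMeasure k x0 xend)
    (K : Ω → ℕ) (hKlt : ∀ ω, K ω < k)
    -- `K` is a stopping time: `{K ≤ l} ∈ σ(X_1,…,X_l)`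
    (hKstop : ∀ l : ℕ, MeasurableSet[headField k X l] {ω | K ω ≤ l})
    (φ : (ℕ → ℝ) → ℝ) (hφ : Measurable φ) (hφbdd : ∀ y, |φ y| ≤ 1) :
    μ[(fun ω => φ fun i : ℕ => if h : K ω + i < k then X ω ⟨K ω + i, h⟩ else 0) |
        MeasurableSpace.generateFrom
          {A | ∀ l : ℕ, MeasurableSet[headField k X l] (A ∩ {ω | K ω ≤ l})}]
      =ᵐ[μ] fun ω =>
        ∫ y, φ y ∂(paddedBridgeMeasure (k - K ω)
          (if h : K ω = 0 then x0 else X ω ⟨K ω - 1, by have := hKlt ω; omega⟩) xend) := by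
  have hK : IsStoppingTime (headFiltration hX) fun ω => (K ω : WithTop ℕ) :=
    isStoppingTime_natCast_iff.mpr hKstop
  have hKm : Measurable K := measurable_to_countable' fun n => by
    have := hK.measurableSet_eq n
    simp only [Nat.cast_withTop, WithTop.coe_inj] at this
    exact headField_le hX n _ this
  have hσ : MeasurableSpace.generateFrom
      {A | ∀ l : ℕ, MeasurableSet[headField k X l] (A ∩ {ω | K ω ≤ l})} = hK.measurableSpace :=
    generateFrom_eq_stoppingTime_measurableSpace hK fun ω => (hKlt ω).le
  have integrable {F : Ω → ℝ} (hF : Measurable F) (hF1 : ∀ ω, |F ω| ≤ 1) : Integrable F μ :=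
    .of_bound hF.aestronglyMeasurable 1 (ae_of_all _ hF1)
  have hstopped : Measurable fun ω => shiftPad k (K ω) (X ω) :=
    (measurable_from_prod_countable_left (f := fun p : (Fin k → ℝ) × ℕ => shiftPad k p.2 p.1)
      (measurable_shiftPad k)).comp (hX.prodMk hKm)
  rw [hσ]
  refine (condExp_stoppingTime_ae_eq hK (f := fun n ω => φ (shiftPad k n (X ω)))
    (g := fun n ω => ∫ y, φ y ∂paddedBridgeMeasure (k - n) (bridgeExt k x0 xend (X ω) n) xend)
    (fun n => integrable (hφ.comp ((measurable_shiftPad k n).comp hX)) fun _ => hφbdd _)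
    (integrable (hφ.comp hstopped) fun _ => hφbdd _) ?_).trans (ae_of_all _ fun ω => ?_)
  · rintro _ ⟨ω, rfl⟩
    exact condExp_shiftPad_headField (hKlt ω).le hX hlaw hφ hφbdd
  · simp only [bridgeExt_eq_dite (hKlt ω).le]
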